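/- arXiv:0707.1263 — 4 statements merged into one kernel-verified Lean document; each statement's English description precedes it below -/
import Mathlib

section
/- Let α be a Pisot number. Then dist(α^k, ℤ) → 0 as k → ∞. -/
/-- A Pisot number: a real algebraic integer `α > 1` all of whose Galois
conjugates (the other complex roots of its minimal polynomial over `ℚ`)
have modulus strictly less than `1`. -/
def IsPisot (α : ℝ) : Prop :=
  1 < α ∧ IsIntegral ℤ α ∧
    ∀ z : ℂ, z ∈ (minpoly ℚ α).aroots ℂ → z ≠ (α : ℂ) → ‖z‖ < 1

/-!
The trace of `α ^ k` from `ℚ(α)` to `ℚ` is a rational integer, and it is the sum of the `k`-th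
powers of all conjugates of `α`. Hence `α ^ k` differs from an integer by at most the sum of the
`k`-th powers of the moduli of the other conjugates, which tends to `0` when they all lie in the
open unit disc.
-/

open IntermediateField Filter Topology

section Conjugates

variable {K : Type*} [Field K] [Algebra ℚ K] [FiniteDimensional ℚ K]

open Classical in
theorem exists_int_norm_sub_le_sum_norm_conjugates {x : K} (hx : IsIntegral ℤ x)
    (σ₀ : K →ₐ[ℚ] ℂ) : ∃ n : ℤ, ‖σ₀ x - n‖ ≤ ∑ σ ∈ Finset.univ.erase σ₀, ‖σ x‖ := by
  obtain ⟨n, hn⟩ := IsIntegrallyClosed.isIntegral_iff.mp (Algebra.isIntegral_trace (L := ℚ) hx)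
  have htrace : (n : ℂ) = σ₀ x + ∑ σ ∈ Finset.univ.erase σ₀, σ x := by
    have : (n : ℂ) = algebraMap ℚ ℂ (Algebra.trace ℚ K x) := by simp [← hn]
    rw [this, trace_eq_sum_embeddings ℂ]
    exact (Finset.add_sum_erase _ _ (Finset.mem_univ σ₀)).symm
  refine ⟨n, ?_⟩
  calc ‖σ₀ x - n‖ = ‖∑ σ ∈ Finset.univ.erase σ₀, σ x‖ := by
        rw [htrace, sub_add_cancel_left, norm_neg]
    _ ≤ ∑ σ ∈ Finset.univ.erase σ₀, ‖σ x‖ := norm_sum_le _ _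

theorem exists_int_tendsto_norm_pow_sub {x : K} (hx : IsIntegral ℤ x) (σ₀ : K →ₐ[ℚ] ℂ)
    (hσ : ∀ σ ≠ σ₀, ‖σ x‖ < 1) :
    ∃ n : ℕ → ℤ, Tendsto (fun k ↦ ‖σ₀ x ^ k - n k‖) atTop (𝓝 0) := by
  classical
  choose n hn using fun k : ℕ ↦ exists_int_norm_sub_le_sum_norm_conjugates (hx.pow k) σ₀
  have hsum : Tendsto (fun k ↦ ∑ σ ∈ Finset.univ.erase σ₀, ‖σ x‖ ^ k) atTop (𝓝 0) := by
    simpa only [Finset.sum_const_zero] using tendsto_finsetSum _ fun σ hσ' ↦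
      tendsto_pow_atTop_nhds_zero_of_lt_one (norm_nonneg _) (hσ σ (Finset.ne_of_mem_erase hσ'))
  refine ⟨n, squeeze_zero (fun _ ↦ norm_nonneg _) (fun k ↦ ?_) hsum⟩
  simpa only [map_pow, norm_pow] using hn k

end Conjugates

theorem tendsto_abs_sub_round_of_tendsto_abs_sub_int {f : ℕ → ℝ} {n : ℕ → ℤ}
    (h : Tendsto (fun k ↦ |f k - n k|) atTop (𝓝 0)) :
    Tendsto (fun k ↦ |f k - round (f k)|) atTop (𝓝 0) :=
  squeeze_zero (fun _ ↦ abs_nonneg _) (fun k ↦ round_le (f k) (n k)) h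

noncomputable def realEmbeddingAdjoin (α : ℝ) : ℚ⟮α⟯ →ₐ[ℚ] ℂ :=
  (Complex.ofRealHom.comp (algebraMap ℚ⟮α⟯ ℝ)).toRatAlgHom

theorem realEmbeddingAdjoin_gen (α : ℝ) :
    realEmbeddingAdjoin α (AdjoinSimple.gen ℚ α) = α :=
  congrArg Complex.ofReal (AdjoinSimple.algebraMap_gen ℚ α)

namespace IsPisot

variable {α : ℝ}

theorem isIntegral_gen (hα : IsPisot α) : IsIntegral ℤ (AdjoinSimple.gen ℚ α) := by
  rw [← isIntegral_algebraMap_iff (algebraMap ℚ⟮α⟯ ℝ).injective, AdjoinSimple.algebraMap_gen]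
  exact hα.2.1

theorem finiteDimensional_adjoin (hα : IsPisot α) : FiniteDimensional ℚ ℚ⟮α⟯ :=
  adjoin.finiteDimensional hα.2.1.tower_top

theorem norm_embedding_gen_lt_one (hα : IsPisot α) {σ : ℚ⟮α⟯ →ₐ[ℚ] ℂ}
    (hσ : σ ≠ realEmbeddingAdjoin α) :
    ‖σ (AdjoinSimple.gen ℚ α)‖ < 1 := by
  have hQ : IsIntegral ℚ α := hα.2.1.tower_top
  refine hα.2.2 _ ?_ fun h ↦ hσ ((adjoin.powerBasis hQ).algHom_ext ?_)
  · rw [Polynomial.mem_aroots, Polynomial.aeval_algHom_apply]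
    exact ⟨minpoly.ne_zero hQ, (congrArg σ (aeval_gen_minpoly ℚ α)).trans (map_zero σ)⟩
  · rw [adjoin.powerBasis_gen]
    exact h.trans (realEmbeddingAdjoin_gen α).symm

end IsPisot

/-- For a Pisot number α, dist(α^k, ℤ) → 0 as k → ∞. -/
theorem pisot_dist_to_int_tendsto_zero (α : ℝ) (hα : IsPisot α) :
    Filter.Tendsto (fun k : ℕ => |α ^ k - round (α ^ k)|)
      Filter.atTop (nhds 0) := by
  have := hα.finiteDimensional_adjoin
  obtain ⟨n, hn⟩ := exists_int_tendsto_norm_pow_sub hα.isIntegral_gen (realEmbeddingAdjoin α)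
    fun _ ↦ hα.norm_embedding_gen_lt_one
  refine tendsto_abs_sub_round_of_tendsto_abs_sub_int (n := n) ?_
  simpa only [realEmbeddingAdjoin_gen, ← Complex.ofReal_pow, ← Complex.ofReal_intCast,
    ← Complex.ofReal_sub, Complex.norm_real, Real.norm_eq_abs] using hn
end

section
/- Let α > 1 be a Pisot number, λ = 1/α, and let μ̂(ξ) = ∏_{n=1}^{∞} (1/3)(1 + 2e^{2πiλⁿξ}) (the Fourier transform of the 2D Hutchinson measure with digits {(0,0),(1,0),(0,1)} and equal weights, restricted to the line spanned by (1,1)). Then there exists C > 0 such that |μ̂(α^k)| ≥ C for all k ∈ ℕ₀. -/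
open IntermediateField

theorem IntermediateField.AdjoinSimple.algHom_ext {F E K : Type*} [Field F] [Field E]
    [Algebra F E] [Semiring K] [Algebra F K] {α : E} {σ τ : F⟮α⟯ →ₐ[F] K}
    (h : σ (AdjoinSimple.gen F α) = τ (AdjoinSimple.gen F α)) : σ = τ :=
  algHom_ext_of_eq_adjoin F rfl fun _ hx => by rcases hx with rfl; exact h

theorem IsIntegral.exists_int_eq_sum_embeddings {L : Type*} [Field L] [Algebra ℚ L]
    [FiniteDimensional ℚ L] {x : L} (hx : IsIntegral ℤ x) :
    ∃ m : ℤ, (m : ℂ) = ∑ σ : L →ₐ[ℚ] ℂ, σ x := by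
  obtain ⟨m, hm⟩ : ∃ m : ℤ, (m : ℚ) = Algebra.trace ℚ L x :=
    IsIntegrallyClosed.isIntegral_iff.mp (Algebra.isIntegral_trace hx)
  refine ⟨m, ?_⟩
  rw [← trace_eq_sum_embeddings ℂ, ← hm, map_intCast]

namespace IsPisot

theorem norm_lt_one_of_ne {α : ℝ} (hα : IsPisot α) (σ : ℚ⟮α⟯ →ₐ[ℚ] ℂ)
    (hσ : σ (AdjoinSimple.gen ℚ α) ≠ α) : ‖σ (AdjoinSimple.gen ℚ α)‖ < 1 := by
  refine hα.2.2 _ (Polynomial.mem_aroots.mpr ⟨minpoly.ne_zero hα.2.1.tower_top, ?_⟩) hσ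
  rw [Polynomial.aeval_algHom_apply]
  exact (congrArg σ (aeval_gen_minpoly ℚ α)).trans (map_zero σ)

theorem exists_abs_pow_sub_int_le {α : ℝ} (hα : IsPisot α) :
    ∃ D θ : ℝ, 0 ≤ D ∧ 0 ≤ θ ∧ θ < 1 ∧ ∀ k : ℕ, ∃ m : ℤ, |α ^ k - m| ≤ D * θ ^ k := by
  classical
  have : FiniteDimensional ℚ ℚ⟮α⟯ := adjoin.finiteDimensional hα.2.1.tower_top
  set g := AdjoinSimple.gen ℚ α
  have hg : IsIntegral ℤ g := (isIntegral_algebraMap_iff (algebraMap ℚ⟮α⟯ ℝ).injective).mp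
    (by rw [AdjoinSimple.algebraMap_gen]; exact hα.2.1)
  let σ₀ : ℚ⟮α⟯ →ₐ[ℚ] ℂ := (Complex.ofRealAm.restrictScalars ℚ).comp (val _)
  have hσ₀ : σ₀ g = α := congrArg Complex.ofReal (AdjoinSimple.algebraMap_gen ℚ α)
  set s := Finset.univ.erase σ₀
  set θ : NNReal := s.sup fun σ => ‖σ g‖₊
  have hθ : (θ : ℝ) < 1 := by
    refine NNReal.coe_lt_one.mpr (Finset.sup_lt_iff one_pos |>.mpr fun σ hσ => ?_)
    refine NNReal.coe_lt_one.mp (hα.norm_lt_one_of_ne σ fun h => (Finset.mem_erase.mp hσ).1 ?_)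
    exact AdjoinSimple.algHom_ext (h.trans hσ₀.symm)
  have hθ_ge : ∀ σ ∈ s, ‖σ g‖ ≤ θ := fun σ hσ => by
    exact_mod_cast Finset.le_sup (f := fun σ => ‖σ g‖₊) hσ
  refine ⟨s.card, θ, by positivity, θ.coe_nonneg, hθ, fun k => ?_⟩
  obtain ⟨m, hm⟩ := (hg.pow k).exists_int_eq_sum_embeddings
  refine ⟨m, ?_⟩
  have hsplit : ((α ^ k - m : ℝ) : ℂ) = -∑ σ ∈ s, σ g ^ k := by
    rw [Complex.ofReal_sub, Complex.ofReal_intCast, hm,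
      ← Finset.add_sum_erase _ _ (Finset.mem_univ σ₀)]
    simp only [map_pow, hσ₀, Complex.ofReal_pow]
    ring
  calc |α ^ k - m| = ‖∑ σ ∈ s, σ g ^ k‖ := by
        rw [← norm_neg, ← hsplit, Complex.norm_real, Real.norm_eq_abs]
    _ ≤ ∑ σ ∈ s, (θ : ℝ) ^ k := norm_sum_le_of_le _ fun σ hσ => by
        rw [norm_pow]; exact pow_le_pow_left₀ (norm_nonneg _) (hθ_ge σ hσ) k
    _ = s.card * θ ^ k := by rw [Finset.sum_const, nsmul_eq_mul]

theorem exists_abs_inv_pow_mul_pow_sub_int_le {α : ℝ} (hα : IsPisot α) :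
    ∃ D ρ : ℝ, 0 ≤ D ∧ 0 ≤ ρ ∧ ρ < 1 ∧
      ∀ n k : ℕ, ∃ m : ℤ, |(α ^ n)⁻¹ * α ^ k - m| ≤ D * ρ ^ Nat.dist n k := by
  obtain ⟨D, θ, hD, hθ0, hθ1, happrox⟩ := hα.exists_abs_pow_sub_int_le
  have hα0 : 0 < α := one_pos.trans hα.1
  refine ⟨max D 1, max θ α⁻¹, by positivity, le_max_of_le_left hθ0,
    max_lt hθ1 (inv_lt_one_of_one_lt₀ hα.1), fun n k => ?_⟩
  rcases le_total n k with hnk | hkn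
  · obtain ⟨m, hm⟩ := happrox (k - n)
    refine ⟨m, ?_⟩
    rw [mul_comm, ← pow_sub₀ α hα0.ne' hnk, Nat.dist_eq_sub_of_le hnk]
    exact hm.trans (mul_le_mul (le_max_left _ _) (pow_le_pow_left₀ hθ0 (le_max_left _ _) _)
      (by positivity) (by positivity))
  · refine ⟨0, ?_⟩
    have hinv : (α ^ n)⁻¹ * α ^ k = α⁻¹ ^ (n - k) := by
      rw [inv_pow, pow_sub₀ α hα0.ne' hkn, mul_inv, inv_inv]
    rw [hinv, Int.cast_zero, sub_zero, abs_of_pos (by positivity),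
      Nat.dist_eq_sub_of_le_right hkn]
    calc α⁻¹ ^ (n - k) ≤ 1 * max θ α⁻¹ ^ (n - k) := by
          rw [one_mul]; exact pow_le_pow_left₀ (by positivity) (le_max_right _ _) _
      _ ≤ max D 1 * max θ α⁻¹ ^ (n - k) := by gcongr; exact le_max_right _ _

end IsPisot

open Real

theorem sum_pow_le_of_injOn {r : ℝ} (hr0 : 0 ≤ r) (hr1 : r < 1) {t : Finset ℕ} {g : ℕ → ℕ}
    (hg : Set.InjOn g t) : ∑ n ∈ t, r ^ g n ≤ (1 - r)⁻¹ := by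
  rw [← Finset.sum_image hg, ← tsum_geometric_of_lt_one hr0 hr1]
  exact (summable_geometric_of_lt_one hr0 hr1).sum_le_tsum _ fun i _ => pow_nonneg hr0 i

theorem sum_pow_dist_le {r : ℝ} (hr0 : 0 ≤ r) (hr1 : r < 1) (s : Finset ℕ) (k : ℕ) :
    ∑ n ∈ s, r ^ Nat.dist n k ≤ 2 * (1 - r)⁻¹ := by
  rw [← Finset.sum_filter_add_sum_filter_not s (· ≤ k), two_mul]
  refine add_le_add ?_ ?_
  · rw [Finset.sum_congr rfl fun n hn => by rw [Nat.dist_eq_sub_of_le (Finset.mem_filter.mp hn).2]]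
    refine sum_pow_le_of_injOn hr0 hr1 fun a ha b hb hab => ?_
    simp only [Finset.coe_filter, Set.mem_ofPred_eq] at ha hb hab
    omega
  · rw [Finset.sum_congr rfl fun n hn =>
      by rw [Nat.dist_eq_sub_of_le_right (not_le.mp (Finset.mem_filter.mp hn).2).le]]
    refine sum_pow_le_of_injOn hr0 hr1 fun a ha b hb hab => ?_
    simp only [Finset.coe_filter, Set.mem_ofPred_eq] at ha hb hab
    omega

theorem exp_neg_sum_le_norm_prod {ι 𝕜 : Type*} [NormedField 𝕜] {s : Finset ι} {f : ι → 𝕜}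
    {c : ι → ℝ} (h : ∀ i ∈ s, exp (-c i) ≤ ‖f i‖) : exp (-∑ i ∈ s, c i) ≤ ‖∏ i ∈ s, f i‖ := by
  rw [norm_prod, ← Finset.sum_neg_distrib, exp_sum]
  exact Finset.prod_le_prod (fun i _ => (exp_pos _).le) h

theorem exp_neg_two_mul_le_one_sub {t : ℝ} (ht0 : 0 ≤ t) (ht : t ≤ 1 / 2) :
    exp (-(2 * t)) ≤ 1 - t := by
  have : exp (-(2 * t)) * exp (2 * t) = 1 := by rw [← exp_add, neg_add_cancel, exp_zero]
  nlinarith [add_one_le_exp (2 * t), exp_pos (-(2 * t))]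

/-- The Fourier transform of the uniform measure on `{(0,0), (1,0), (0,1)}` at `(x, x)`. -/
noncomputable def digitFactor (x : ℝ) : ℂ :=
  (1 / 3 : ℂ) * (1 + 2 * Complex.exp (2 * π * Complex.I * x))

theorem norm_exp_two_pi_I_mul (x : ℝ) : ‖Complex.exp (2 * π * Complex.I * x)‖ = 1 := by
  rw [show (2 * π * Complex.I * x : ℂ) = (2 * π * x : ℝ) * Complex.I by push_cast; ring,
    Complex.norm_exp_ofReal_mul_I]

theorem one_div_three_le_norm_digitFactor (x : ℝ) : 1 / 3 ≤ ‖digitFactor x‖ := by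
  have h := norm_sub_norm_le (2 * Complex.exp (2 * π * Complex.I * x)) (-1)
  rw [sub_neg_eq_add, add_comm, norm_mul, norm_exp_two_pi_I_mul, norm_neg] at h
  rw [digitFactor, norm_mul]
  norm_num at h ⊢
  linarith

theorem norm_digitFactor_sub_one_le (x : ℝ) (m : ℤ) :
    ‖digitFactor x - 1‖ ≤ 4 * π / 3 * |x - m| := by
  have hper :
      digitFactor x - 1 = 2 / 3 * (Complex.exp (Complex.I * (2 * π * (x - m) : ℝ)) - 1) := by
    rw [digitFactor, show Complex.I * (2 * π * (x - m) : ℝ)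
        = 2 * π * Complex.I * x + (-m) * (2 * π * Complex.I) by push_cast; ring,
      Complex.exp_add, ← Int.cast_neg, Complex.exp_int_mul_two_pi_mul_I]
    ring
  rw [hper, norm_mul]
  calc ‖(2 / 3 : ℂ)‖ * ‖Complex.exp (Complex.I * (2 * π * (x - m) : ℝ)) - 1‖
      ≤ 2 / 3 * ‖2 * π * (x - m)‖ := by
        rw [show ‖(2 / 3 : ℂ)‖ = 2 / 3 by norm_num]
        gcongr
        exact Real.norm_exp_I_mul_ofReal_sub_one_le
    _ = 4 * π / 3 * |x - m| := by
        rw [Real.norm_eq_abs, abs_mul, abs_of_pos (by positivity : (0 : ℝ) < 2 * π)]; ring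

theorem exp_neg_le_norm_digitFactor (x : ℝ) (m : ℤ) :
    exp (-(8 * π * |x - m|)) ≤ ‖digitFactor x‖ := by
  have hclose := norm_digitFactor_sub_one_le x m
  rcases le_or_gt (4 * π / 3 * |x - m|) (1 / 2) with ht | ht
  · calc exp (-(8 * π * |x - m|)) ≤ exp (-(2 * (4 * π / 3 * |x - m|))) :=
          exp_le_exp.mpr (by nlinarith [pi_pos, abs_nonneg (x - m)])
      _ ≤ 1 - 4 * π / 3 * |x - m| := exp_neg_two_mul_le_one_sub (by positivity) ht
      _ ≤ ‖digitFactor x‖ := by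
          have := norm_sub_norm_le 1 (digitFactor x)
          rw [norm_one, norm_sub_rev] at this
          linarith
  · -- past the threshold the exponent exceeds `log 3`, and `1/3` is a lower bound anyway
    calc exp (-(8 * π * |x - m|)) ≤ exp (-log 3) := by
          gcongr; linarith [log_le_sub_one_of_pos (by norm_num : (0 : ℝ) < 3)]
      _ = 1 / 3 := by rw [exp_neg, exp_log (by norm_num)]; norm_num
      _ ≤ ‖digitFactor x‖ := one_div_three_le_norm_digitFactor x

open Real Filter Finset in
/-- Let α be a Pisot number, λ = 1/α, and
μ̂(ξ) = ∏_{n=1}^∞ (1/3)(1 + 2 e^{2πiλⁿξ}) (the Fourier transform of the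
2D Hutchinson measure with digits {(0,0),(1,0),(0,1)} and equal weights,
restricted to the diagonal direction). Then ∃ C > 0 with
|μ̂(α^k)| ≥ C for all k ∈ ℕ₀. -/
theorem erdos_2d_diagonal_lower_bound (α lam : ℝ) (hα : IsPisot α)
    (hlam : lam = 1 / α) (F : ℝ → ℂ)
    (hF : ∀ ξ : ℝ, Tendsto
        (fun M : ℕ => ∏ n ∈ Finset.Icc 1 M,
          (1/3 : ℂ) * (1 + 2 * Complex.exp (2 * π * Complex.I * (lam ^ n) * ξ)))
        atTop (nhds (F ξ))) :
    ∃ C > 0, ∀ k : ℕ, C ≤ ‖F (α ^ k)‖ := by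
  obtain ⟨D, ρ, hD, hρ0, hρ1, happrox⟩ := hα.exists_abs_inv_pow_mul_pow_sub_int_le
  choose m hm using happrox
  set S := 8 * π * (D * (2 * (1 - ρ)⁻¹))
  refine ⟨exp (-S), exp_pos _, fun k => ?_⟩
  have hfactor : ∀ n,
      (1/3 : ℂ) * (1 + 2 * Complex.exp (2 * π * Complex.I * (lam ^ n) * (α ^ k : ℝ)))
        = digitFactor ((α ^ n)⁻¹ * α ^ k) := fun n => by
    rw [digitFactor, hlam]; push_cast; ring_nf
  have hsum : ∀ M, ∑ n ∈ Icc 1 M, 8 * π * |(α ^ n)⁻¹ * α ^ k - m n k| ≤ S := fun M => calc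
    _ = 8 * π * ∑ n ∈ Icc 1 M, |(α ^ n)⁻¹ * α ^ k - m n k| := (mul_sum _ _ _).symm
    _ ≤ 8 * π * ∑ n ∈ Icc 1 M, D * ρ ^ Nat.dist n k := by gcongr with n; exact hm n k
    _ ≤ 8 * π * (D * (2 * (1 - ρ)⁻¹)) := by
      rw [← mul_sum]; gcongr; exact sum_pow_dist_le hρ0 hρ1 _ k
  have hpartial : ∀ M, exp (-S) ≤ ‖∏ n ∈ Icc 1 M,
      (1/3 : ℂ) * (1 + 2 * Complex.exp (2 * π * Complex.I * (lam ^ n) * (α ^ k : ℝ)))‖ :=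
      fun M => by
    simp only [hfactor]
    exact (exp_le_exp.mpr (neg_le_neg (hsum M))).trans
      (exp_neg_sum_le_norm_prod fun n _ => exp_neg_le_norm_digitFactor _ (m n k))
  exact ge_of_tendsto (hF _).norm (Eventually.of_forall hpartial)
end

section
/- Let μ = Σ_{b∈B} p_b μ∘τ_b⁻¹ be the unique (Hutchinson) invariant probability measure of an affine IFS τ_b(x) = A⁻¹(x+b) in ℝ^d, with A invertible expansive, B finite, p_b > 0, Σp_b = 1. Then in the Lebesgue decomposition μ = μ_{ac} + μ_s with respect to Lebesgue measure, either μ_{ac} = 0 or μ_s = 0; i.e., μ is either purely singular or absolutely continuous. -/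
/-!
The Hutchinson operator `H ν = ∑ b, p b • (τ b)_* ν` is additive, and since every `τ b` is an
invertible affine map it sends measures absolutely continuous (resp. singular) with respect to
Lebesgue measure to measures of the same kind; by uniqueness of the Lebesgue decomposition, `H`
fixes both parts of its fixed point `μ`. On the other hand `H` has at most one fixed probability
measure: for two fixed points `ν₁, ν₂` and a test function `f` with modulus of continuity `ω`,
expanding `n` times gives `|∫ f ∂ν₁ - ∫ f ∂ν₂| ≤ ∫ ω (A⁻¹ ^ n (x - y)) ∂(ν₁ ⊗ ν₂)`, which tends
to `0` because the spectral radius of `A⁻¹` is `< 1`. Hence the normalised parts of `μ` would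
coincide, which is absurd for a nonzero absolutely continuous and a nonzero singular measure.
-/

open MeasureTheory Filter Topology Matrix Function
open scoped NNReal ENNReal

theorem tendsto_pow_atTop_nhds_zero_of_spectralRadius_lt_one {A : Type*} [NormedRing A]
    [NormedAlgebra ℂ A] [CompleteSpace A] {a : A} (ha : spectralRadius ℂ a < 1) :
    Tendsto (a ^ ·) atTop (𝓝 0) := by
  obtain ⟨r, hρr, hr1⟩ := ENNReal.lt_iff_exists_nnreal_btwn.1 ha
  have hpow : ∀ᶠ n : ℕ in atTop, ‖a ^ n‖ ≤ (r : ℝ) ^ n := by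
    filter_upwards [(spectrum.pow_nnnorm_pow_one_div_tendsto_nhds_spectralRadius a
      ).eventually_lt_const hρr, eventually_gt_atTop 0] with n hn hn0
    rw [one_div, ENNReal.rpow_inv_lt_iff (by positivity), ENNReal.rpow_natCast] at hn
    exact_mod_cast hn.le
  exact squeeze_zero_norm' hpow
    (tendsto_pow_atTop_nhds_zero_of_lt_one r.coe_nonneg (mod_cast hr1))

section MatrixNorm

-- Any matrix norm would do: it only makes `Matrix n n ℂ` a Banach algebra, and all of them
-- induce the product topology in which the limits below are stated.
attribute [local instance] Matrix.linftyOpNormedRing Matrix.linftyOpNormedAlgebra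

theorem Matrix.spectralRadius_inv_lt_one {n : Type*} [Fintype n] [DecidableEq n]
    {N : Matrix n n ℂ} (hN : IsUnit N) (h : ∀ z, N.charpoly.IsRoot z → 1 < ‖z‖) :
    spectralRadius ℂ N⁻¹ < 1 := by
  obtain ⟨u, rfl⟩ := hN
  rw [← coe_units_inv]
  rcases (spectrum ℂ (↑u⁻¹ : Matrix n n ℂ)).eq_empty_or_nonempty with hempty | hne
  · rw [spectralRadius, hempty]
    simp
  refine spectrum.spectralRadius_lt_of_forall_lt_of_nonempty hne fun z hz => ?_
  have hroot : (u : Matrix n n ℂ).charpoly.IsRoot z⁻¹ :=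
    mem_spectrum_iff_isRoot_charpoly.1 (spectrum.inv₀_mem_iff.2 hz)
  have hnorm := h _ hroot
  rw [norm_inv, one_lt_inv_iff₀] at hnorm
  exact_mod_cast hnorm.2

theorem Matrix.tendsto_inv_pow_atTop_nhds_zero {n : Type*} [Fintype n] [DecidableEq n]
    {A : Matrix n n ℝ} (hA : IsUnit A.det)
    (h : ∀ z : ℂ, (A.map Complex.ofReal).charpoly.IsRoot z → 1 < ‖z‖) :
    Tendsto (A⁻¹ ^ ·) atTop (𝓝 0) := by
  have hco : ⇑Complex.ofRealHom = Complex.ofReal := rfl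
  have hunit : IsUnit (A.map Complex.ofReal) := by
    rw [isUnit_iff_isUnit_det]
    exact RingHom.map_det Complex.ofRealHom A ▸ hA.map _
  have hinv : (A⁻¹).map Complex.ofReal = (A.map Complex.ofReal)⁻¹ := by
    refine (inv_eq_right_inv ?_).symm
    rw [← hco, ← Matrix.map_mul, mul_nonsing_inv A hA, Matrix.map_one _ (map_zero _) (map_one _)]
  have hk : ∀ k : ℕ, ((A.map Complex.ofReal)⁻¹ ^ k).map Complex.re = A⁻¹ ^ k := fun k => by
    rw [← hinv, ← hco, ← RingHom.mapMatrix_apply, ← map_pow]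
    ext i j
    simp
  have hlim : Tendsto ((A.map Complex.ofReal)⁻¹ ^ ·) atTop (𝓝 0) :=
    tendsto_pow_atTop_nhds_zero_of_spectralRadius_lt_one (spectralRadius_inv_lt_one hunit h)
  have hre : Tendsto (fun k => ((A.map Complex.ofReal)⁻¹ ^ k).map Complex.re) atTop
      (𝓝 ((0 : Matrix n n ℂ).map Complex.re)) :=
    ((continuous_id.matrix_map Complex.continuous_re).tendsto 0).comp hlim
  simpa only [hk, Matrix.map_zero _ Complex.zero_re] using hre

end MatrixNorm

theorem MeasureTheory.ext_of_forall_integral_lipschitz_eq {Ω : Type*} [MeasurableSpace Ω]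
    [PseudoEMetricSpace Ω] [BorelSpace Ω] {μ ν : Measure Ω} [IsFiniteMeasure μ]
    [IsFiniteMeasure ν]
    (h : ∀ (f : Ω → ℝ) (K : ℝ≥0), LipschitzWith K f → (∀ x, |f x| ≤ 1) →
      ∫ x, f x ∂μ = ∫ x, f x ∂ν) :
    μ = ν := by
  have hδ (n : ℕ) : (0 : ℝ) < 1 / (n + 1) := Nat.one_div_pos_of_nat
  have hclosed (F : Set Ω) (hF : IsClosed F) : μ F = ν F := by
    have hint (n : ℕ) : ∫ x, (thickenedIndicator (hδ n) F x : ℝ) ∂μ =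
        ∫ x, (thickenedIndicator (hδ n) F x : ℝ) ∂ν :=
      h _ _ ((LipschitzWith.subtype_val _).comp (lipschitzWith_thickenedIndicator (hδ n) F))
        fun x => by simpa using thickenedIndicator_le_one (hδ n) F x
    have hreal : μ.real F = ν.real F := tendsto_nhds_unique
      ((tendsto_integral_thickenedIndicator_of_isClosed μ hF hδ
        tendsto_one_div_add_atTop_nhds_zero_nat).congr hint)
      (tendsto_integral_thickenedIndicator_of_isClosed ν hF hδ
        tendsto_one_div_add_atTop_nhds_zero_nat)
    exact (measureReal_eq_measureReal_iff (measure_ne_top μ F) (measure_ne_top ν F)).1 hreal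
  refine ext_of_generate_finite _ ?_ isPiSystem_isClosed hclosed (hclosed _ isClosed_univ)
  rw [BorelSpace.measurable_eq (α := Ω), borel_eq_generateFrom_isClosed]

theorem MeasureTheory.Measure.singularPart_eq_and_withDensity_rnDeriv_eq {α : Type*}
    [MeasurableSpace α] {μ ν ξ ρ : Measure α} [ρ.HaveLebesgueDecomposition ν] (hξ : ξ ⟂ₘ ν)
    (hρ : ρ ≪ ν) (h : μ = ξ + ρ) :
    μ.singularPart ν = ξ ∧ ν.withDensity (μ.rnDeriv ν) = ρ := by
  rw [← Measure.withDensity_rnDeriv_eq ρ ν hρ] at h ⊢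
  exact ⟨(Measure.eq_singularPart (Measure.measurable_rnDeriv ρ ν) hξ h).symm,
    (Measure.eq_withDensity_rnDeriv (Measure.measurable_rnDeriv ρ ν) hξ h).symm⟩

lemma abs_integral_sub_integral_le_integral_prod {Ω : Type*} [MeasurableSpace Ω]
    {ν₁ ν₂ : Measure Ω} [IsProbabilityMeasure ν₁] [IsProbabilityMeasure ν₂] {f : Ω → ℝ}
    {g : Ω × Ω → ℝ} (hf₁ : Integrable f ν₁) (hf₂ : Integrable f ν₂)
    (hg : Integrable g (ν₁.prod ν₂)) (h : ∀ x y, |f x - f y| ≤ g (x, y)) :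
    |∫ x, f x ∂ν₁ - ∫ x, f x ∂ν₂| ≤ ∫ q, g q ∂ν₁.prod ν₂ := by
  have hprod : ∫ x, f x ∂ν₁ - ∫ x, f x ∂ν₂ = ∫ q, (f q.1 - f q.2) ∂ν₁.prod ν₂ := by
    rw [integral_sub (hf₁.comp_fst ν₂) (hf₂.comp_snd ν₁), integral_fun_fst, integral_fun_snd]
    simp
  rw [hprod]
  exact norm_integral_le_of_norm_le (f := fun q => f q.1 - f q.2) hg
    (ae_of_all _ fun q => h q.1 q.2)

lemma map_affine_volume {ι : Type*} [Fintype ι] [DecidableEq ι] {M : Matrix ι ι ℝ}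
    (hM : M.det ≠ 0) (b : ι → ℝ) :
    volume.map (fun x => M *ᵥ (x + b)) = ENNReal.ofReal |M.det⁻¹| • volume := by
  have : (fun x => M *ᵥ (x + b)) = toLin' M ∘ (· + b) := rfl
  rw [this, ← Measure.map_map (by fun_prop) (by fun_prop), map_add_right_eq_self,
    Real.map_matrix_volume_pi_eq_smul_volume_pi hM]

section Hutchinson

variable {ι : Type*} [Fintype ι] (M : Matrix ι ι ℝ) (B : Finset (ι → ℝ))
  (p : (ι → ℝ) → ℝ)

noncomputable def hutchinsonOp (ν : Measure (ι → ℝ)) : Measure (ι → ℝ) :=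
  ∑ b ∈ B, ENNReal.ofReal (p b) • ν.map (fun x => M *ᵥ (x + b))

instance (ν : Measure (ι → ℝ)) [IsFiniteMeasure ν] :
    IsFiniteMeasure (hutchinsonOp M B p ν) where
  measure_univ_lt_top := by
    simp only [hutchinsonOp, Measure.coe_finsetSum, Finset.sum_apply, Measure.smul_apply,
      smul_eq_mul]
    exact ENNReal.sum_lt_top.2 fun b _ =>
      ENNReal.mul_lt_top ENNReal.ofReal_lt_top (measure_lt_top _ _)

lemma hutchinsonOp_add (ν₁ ν₂ : Measure (ι → ℝ)) :
    hutchinsonOp M B p (ν₁ + ν₂) = hutchinsonOp M B p ν₁ + hutchinsonOp M B p ν₂ := by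
  simp only [hutchinsonOp, ← Finset.sum_add_distrib, ← smul_add]
  congr! 2 with b
  exact Measure.map_add _ _ (by fun_prop)

lemma hutchinsonOp_smul (c : ℝ≥0∞) (ν : Measure (ι → ℝ)) :
    hutchinsonOp M B p (c • ν) = c • hutchinsonOp M B p ν := by
  simp only [hutchinsonOp, Finset.smul_sum, Measure.map_smul, smul_comm c]

lemma integral_hutchinsonOp (hp : ∀ b ∈ B, 0 ≤ p b) (ν : Measure (ι → ℝ)) [IsFiniteMeasure ν]
    {f : (ι → ℝ) → ℝ} (hf : Continuous f) {C : ℝ} (hC : ∀ x, |f x| ≤ C) :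
    ∫ x, f x ∂hutchinsonOp M B p ν = ∑ b ∈ B, p b * ∫ x, f (M *ᵥ (x + b)) ∂ν := by
  have hτ (b : ι → ℝ) : Measurable fun x : ι → ℝ => M *ᵥ (x + b) := by fun_prop
  rw [hutchinsonOp, integral_finsetSum_measure]
  · refine Finset.sum_congr rfl fun b hb => ?_
    rw [integral_smul_measure, integral_map (hτ b).aemeasurable hf.aestronglyMeasurable,
      ENNReal.toReal_ofReal (hp b hb), smul_eq_mul]
  · exact fun b _ => (Integrable.of_bound hf.aestronglyMeasurable C
      (ae_of_all _ hC)).smul_measure ENNReal.ofReal_ne_top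

variable {M} [DecidableEq ι]

lemma hutchinsonOp_absolutelyContinuous (hM : M.det ≠ 0) {ν : Measure (ι → ℝ)}
    (hν : ν ≪ volume) : hutchinsonOp M B p ν ≪ volume := by
  refine Finset.sum_induction _ (· ≪ volume) (fun _ _ => .add_left) (.zero _) fun b _ => ?_
  refine .smul_left ((hν.map (by fun_prop)).trans ?_) _
  rw [map_affine_volume hM]
  exact Measure.smul_absolutelyContinuous

lemma hutchinsonOp_mutuallySingular (hM : M.det ≠ 0) {ν : Measure (ι → ℝ)}
    (hν : ν ⟂ₘ volume) : hutchinsonOp M B p ν ⟂ₘ volume := by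
  refine Finset.sum_induction _ (· ⟂ₘ volume) (fun _ _ => .add_left) .zero_left fun b _ => ?_
  have hτ : MeasurableEmbedding fun x : ι → ℝ => M *ᵥ (x + b) :=
    (by fun_prop : Continuous _).measurableEmbedding
      ((mulVec_injective_of_det_ne_zero hM).comp (add_left_injective b))
  have hsing := hτ.mutuallySingular_map hν
  rw [map_affine_volume hM] at hsing
  exact (hsing.mono_ac .rfl (Measure.absolutelyContinuous_smul (by simpa using hM))).smul _

lemma isFixedPt_singularPart_and_withDensity_rnDeriv (hM : M.det ≠ 0)
    {μ : Measure (ι → ℝ)} [IsFiniteMeasure μ] (hμ : IsFixedPt (hutchinsonOp M B p) μ) :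
    IsFixedPt (hutchinsonOp M B p) (μ.singularPart volume) ∧
      IsFixedPt (hutchinsonOp M B p) (volume.withDensity (μ.rnDeriv volume)) := by
  have h : μ = hutchinsonOp M B p (μ.singularPart volume) +
      hutchinsonOp M B p (volume.withDensity (μ.rnDeriv volume)) := by
    rw [← hutchinsonOp_add, Measure.singularPart_add_rnDeriv, hμ]
  obtain ⟨hs, hac⟩ := Measure.singularPart_eq_and_withDensity_rnDeriv_eq
    (hutchinsonOp_mutuallySingular B p hM (μ.mutuallySingular_singularPart volume))
    (hutchinsonOp_absolutelyContinuous B p hM (withDensity_absolutelyContinuous _ _)) h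
  exact ⟨hs.symm, hac.symm⟩

section Uniqueness

variable {ν₁ ν₂ : Measure (ι → ℝ)} [IsProbabilityMeasure ν₁] [IsProbabilityMeasure ν₂]

lemma abs_integral_sub_integral_le_of_isFixedPt (hp : ∀ b ∈ B, 0 ≤ p b)
    (hsum : ∑ b ∈ B, p b = 1) (h₁ : IsFixedPt (hutchinsonOp M B p) ν₁)
    (h₂ : IsFixedPt (hutchinsonOp M B p) ν₂) (n : ℕ) {f ω : (ι → ℝ) → ℝ} {C K : ℝ}
    (hf : Continuous f) (hfC : ∀ x, |f x| ≤ C) (hω : Continuous ω) (hωK : ∀ v, |ω v| ≤ K)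
    (hfω : ∀ x y, |f x - f y| ≤ ω (x - y)) :
    |∫ x, f x ∂ν₁ - ∫ x, f x ∂ν₂| ≤ ∫ q, ω (M ^ n *ᵥ (q.1 - q.2)) ∂ν₁.prod ν₂ := by
  induction n generalizing f ω with
  | zero =>
    have hfint (ν : Measure (ι → ℝ)) [IsFiniteMeasure ν] : Integrable f ν :=
      .of_bound hf.aestronglyMeasurable C (ae_of_all _ hfC)
    refine abs_integral_sub_integral_le_integral_prod (hfint ν₁) (hfint ν₂)
      (.of_bound (by fun_prop : Continuous _).aestronglyMeasurable K (ae_of_all _ fun q => hωK _))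
      fun x y => ?_
    simpa using hfω x y
  | succ n ih =>
    have hstep (b : ι → ℝ) :
        |∫ x, f (M *ᵥ (x + b)) ∂ν₁ - ∫ x, f (M *ᵥ (x + b)) ∂ν₂| ≤
          ∫ q, ω (M ^ (n + 1) *ᵥ (q.1 - q.2)) ∂ν₁.prod ν₂ := by
      have := ih (f := fun x => f (M *ᵥ (x + b))) (ω := fun v => ω (M *ᵥ v)) (by fun_prop)
        (fun x => hfC _) (by fun_prop) (fun v => hωK _) fun x y => by
          simpa [← mulVec_sub] using hfω (M *ᵥ (x + b)) (M *ᵥ (y + b))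
      simpa only [mulVec_mulVec, ← pow_succ'] using this
    have hexpand (ν : Measure (ι → ℝ)) [IsFiniteMeasure ν]
        (hν : IsFixedPt (hutchinsonOp M B p) ν) :
        ∫ x, f x ∂ν = ∑ b ∈ B, p b * ∫ x, f (M *ᵥ (x + b)) ∂ν := by
      rw [← integral_hutchinsonOp M B p hp ν hf hfC, hν]
    calc |∫ x, f x ∂ν₁ - ∫ x, f x ∂ν₂|
        = |∑ b ∈ B, p b * (∫ x, f (M *ᵥ (x + b)) ∂ν₁ - ∫ x, f (M *ᵥ (x + b)) ∂ν₂)| := by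
          simp only [hexpand ν₁ h₁, hexpand ν₂ h₂, mul_sub, Finset.sum_sub_distrib]
      _ ≤ ∑ b ∈ B, p b * |∫ x, f (M *ᵥ (x + b)) ∂ν₁ - ∫ x, f (M *ᵥ (x + b)) ∂ν₂| := by
          refine (Finset.abs_sum_le_sum_abs _ _).trans_eq (Finset.sum_congr rfl fun b hb => ?_)
          rw [abs_mul, abs_of_nonneg (hp b hb)]
      _ ≤ ∑ b ∈ B, p b * ∫ q, ω (M ^ (n + 1) *ᵥ (q.1 - q.2)) ∂ν₁.prod ν₂ :=
          Finset.sum_le_sum fun b hb => mul_le_mul_of_nonneg_left (hstep b) (hp b hb)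
      _ = _ := by rw [← Finset.sum_mul, hsum, one_mul]

lemma integral_eq_of_isFixedPt (hM : Tendsto (M ^ ·) atTop (𝓝 0)) (hp : ∀ b ∈ B, 0 ≤ p b)
    (hsum : ∑ b ∈ B, p b = 1) (h₁ : IsFixedPt (hutchinsonOp M B p) ν₁)
    (h₂ : IsFixedPt (hutchinsonOp M B p) ν₂) {f ω : (ι → ℝ) → ℝ} {C K : ℝ}
    (hf : Continuous f) (hfC : ∀ x, |f x| ≤ C) (hω : Continuous ω) (hωK : ∀ v, |ω v| ≤ K)
    (hω0 : ω 0 = 0) (hfω : ∀ x y, |f x - f y| ≤ ω (x - y)) :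
    ∫ x, f x ∂ν₁ = ∫ x, f x ∂ν₂ := by
  have hMv (v : ι → ℝ) : Tendsto (fun n => M ^ n *ᵥ v) atTop (𝓝 0) := by
    simpa [Function.comp_def] using
      ((continuous_id.matrix_mulVec continuous_const).tendsto 0).comp hM
  have hlim : Tendsto (fun n => ∫ q, ω (M ^ n *ᵥ (q.1 - q.2)) ∂ν₁.prod ν₂) atTop (𝓝 0) := by
    have := tendsto_integral_of_dominated_convergence (μ := ν₁.prod ν₂) (fun _ => K)
      (fun n => (by fun_prop : Continuous _).aestronglyMeasurable) (integrable_const K)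
      (fun n => ae_of_all _ fun q => hωK _)
      (ae_of_all _ fun q => hω0 ▸ (hω.tendsto 0).comp (hMv (q.1 - q.2)))
    simpa using this
  have hle := ge_of_tendsto' hlim fun n =>
    abs_integral_sub_integral_le_of_isFixedPt B p hp hsum h₁ h₂ n hf hfC hω hωK hfω
  exact sub_eq_zero.1 (abs_nonpos_iff.1 hle)

lemma eq_of_isFixedPt_hutchinsonOp (hM : Tendsto (M ^ ·) atTop (𝓝 0))
    (hp : ∀ b ∈ B, 0 ≤ p b) (hsum : ∑ b ∈ B, p b = 1) (h₁ : IsFixedPt (hutchinsonOp M B p) ν₁)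
    (h₂ : IsFixedPt (hutchinsonOp M B p) ν₂) : ν₁ = ν₂ := by
  refine ext_of_forall_integral_lipschitz_eq fun f K hK hf1 => ?_
  refine integral_eq_of_isFixedPt B p hM hp hsum h₁ h₂ (ω := fun v => min 2 (K * ‖v‖)) (K := 2)
    hK.continuous hf1 (by fun_prop) (fun v => ?_) (by simp) fun x y => le_min ?_ ?_
  · rw [abs_of_nonneg (by positivity)]
    exact min_le_left _ _
  · linarith [abs_sub (f x) (f y), hf1 x, hf1 y]
  · simpa [Real.dist_eq, dist_eq_norm] using hK.dist_le_mul x y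

end Uniqueness

lemma not_mutuallySingular_of_isFixedPt (hM : Tendsto (M ^ ·) atTop (𝓝 0))
    (hp : ∀ b ∈ B, 0 ≤ p b) (hsum : ∑ b ∈ B, p b = 1) {ρ₁ ρ₂ : Measure (ι → ℝ)}
    [IsFiniteMeasure ρ₁] [IsFiniteMeasure ρ₂] [NeZero ρ₁] [NeZero ρ₂]
    (h₁ : IsFixedPt (hutchinsonOp M B p) ρ₁) (h₂ : IsFixedPt (hutchinsonOp M B p) ρ₂) :
    ¬ ρ₁ ⟂ₘ ρ₂ := by
  intro hsing
  have hnormalize (ρ : Measure (ι → ℝ)) (h : IsFixedPt (hutchinsonOp M B p) ρ) :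
      IsFixedPt (hutchinsonOp M B p) ((ρ Set.univ)⁻¹ • ρ) := by
    rw [IsFixedPt, hutchinsonOp_smul, h]
  have heq := eq_of_isFixedPt_hutchinsonOp B p hM hp hsum (hnormalize ρ₁ h₁) (hnormalize ρ₂ h₂)
  have hself : (ρ₁ Set.univ)⁻¹ • ρ₁ ⟂ₘ (ρ₁ Set.univ)⁻¹ • ρ₁ := by
    nth_rewrite 2 [heq]
    exact ((hsing.smul _).symm.smul _).symm
  exact IsProbabilityMeasure.ne_zero _ ((Measure.MutuallySingular.self_iff _).1 hself)

end Hutchinson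

open MeasureTheory Finset Matrix in
/-- dichotomy: The invariant (Hutchinson) probability
measure μ of an affine IFS τ_b(x) = A⁻¹(x+b) (A invertible expansive,
B finite, weights p_b > 0 summing to 1) is either purely singular or
absolutely continuous: in its Lebesgue decomposition μ = μ_ac + μ_s,
either μ_ac = 0 or μ_s = 0. -/
theorem hutchinson_measure_dichotomy (d : ℕ)
    (A : Matrix (Fin d) (Fin d) ℝ) (hA : IsUnit A.det)
    (hexp : ∀ z : ℂ, (A.map (Complex.ofReal)).charpoly.IsRoot z → 1 < ‖z‖)
    (B : Finset (Fin d → ℝ)) (p : (Fin d → ℝ) → ℝ)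
    (hp : ∀ b ∈ B, 0 < p b) (hsum : ∑ b ∈ B, p b = 1)
    (μ : Measure (Fin d → ℝ)) [IsProbabilityMeasure μ]
    (hinv : μ = ∑ b ∈ B, ENNReal.ofReal (p b) • μ.map (fun x => A⁻¹ *ᵥ (x + b))) :
    volume.withDensity (μ.rnDeriv volume) = 0 ∨ μ.singularPart volume = 0 := by
  have hdet : (A⁻¹).det ≠ 0 := (A.isUnit_nonsing_inv_det hA).ne_zero
  have hp' : ∀ b ∈ B, 0 ≤ p b := fun b hb => (hp b hb).le
  obtain ⟨hs, hac⟩ := isFixedPt_singularPart_and_withDensity_rnDeriv B p hdet hinv.symm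
  have hsing : μ.singularPart volume ⟂ₘ volume.withDensity (μ.rnDeriv volume) :=
    (μ.mutuallySingular_singularPart volume).mono_ac .rfl (withDensity_absolutelyContinuous _ _)
  by_contra! h
  have : NeZero (volume.withDensity (μ.rnDeriv volume)) := ⟨h.1⟩
  have : NeZero (μ.singularPart volume) := ⟨h.2⟩
  exact not_mutuallySingular_of_isFixedPt B p (tendsto_inv_pow_atTop_nhds_zero hA hexp) hp' hsum
    hs hac hsing
end

section
/- Let α > 1 be a Pisot number, λ = 1/α, μ_λ the infinite Bernoulli convolution with μ̂_λ(ξ) = ∏_{n≥1} cos(2πλⁿξ), and C > 0 a constant with |μ̂_λ(α^k)| > C for all k ≥ 0. Then for all n ∈ ℕ, ‖μ_λ − T_{λⁿ/2} μ_λ‖ ≥ 2C, where T_t denotes translation by t and ‖·‖ is total variation norm. -/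
open MeasureTheory Complex Real

section TotalVariation

variable {X E : Type*} [MeasurableSpace X] [NormedAddCommGroup E] [NormedSpace ℝ E]

theorem MeasureTheory.Measure.add_negPart_eq_add_posPart (μ ν : Measure X)
    [IsFiniteMeasure μ] [IsFiniteMeasure ν] :
    μ + (μ.toSignedMeasure - ν.toSignedMeasure).toJordanDecomposition.negPart =
      ν + (μ.toSignedMeasure - ν.toSignedMeasure).toJordanDecomposition.posPart := by
  set j := (μ.toSignedMeasure - ν.toSignedMeasure).toJordanDecomposition
  have hj : j.posPart.toSignedMeasure + ν.toSignedMeasure =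
      μ.toSignedMeasure + j.negPart.toSignedMeasure :=
    sub_eq_sub_iff_add_eq_add.mp (SignedMeasure.toSignedMeasure_toJordanDecomposition _)
  rw [← Measure.toSignedMeasure_eq_toSignedMeasure_iff, Measure.toSignedMeasure_add,
    Measure.toSignedMeasure_add, add_comm ν.toSignedMeasure, hj]

theorem MeasureTheory.norm_integral_sub_integral_le_totalVariation (μ ν : Measure X)
    [IsFiniteMeasure μ] [IsFiniteMeasure ν] {f : X → E} (hf : StronglyMeasurable f) {B : ℝ}
    (hB : ∀ x, ‖f x‖ ≤ B) :
    ‖∫ x, f x ∂μ - ∫ x, f x ∂ν‖ ≤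
      B * (μ.toSignedMeasure - ν.toSignedMeasure).totalVariation.real Set.univ := by
  set p := (μ.toSignedMeasure - ν.toSignedMeasure).toJordanDecomposition.posPart
  set q := (μ.toSignedMeasure - ν.toSignedMeasure).toJordanDecomposition.negPart
  have hint : ∀ (m : Measure X) [IsFiniteMeasure m], Integrable f m := fun m _ =>
    .of_bound hf.aestronglyMeasurable B (.of_forall hB)
  have hsplit : ∫ x, f x ∂μ - ∫ x, f x ∂ν = ∫ x, f x ∂p - ∫ x, f x ∂q := by
    have h := congrArg (fun m => ∫ x, f x ∂m) (Measure.add_negPart_eq_add_posPart μ ν)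
    simp only [integral_add_measure (hint _) (hint _)] at h
    rw [sub_eq_sub_iff_add_eq_add, h, add_comm]
  calc ‖∫ x, f x ∂μ - ∫ x, f x ∂ν‖
      ≤ ‖∫ x, f x ∂p‖ + ‖∫ x, f x ∂q‖ := hsplit ▸ norm_sub_le _ _
    _ ≤ B * p.real Set.univ + B * q.real Set.univ :=
        add_le_add (norm_integral_le_of_norm_le_const (.of_forall hB))
          (norm_integral_le_of_norm_le_const (.of_forall hB))
    _ = _ := by
        rw [← mul_add, SignedMeasure.totalVariation, measureReal_add_apply]

end TotalVariation

theorem integral_exp_map_add_of_mul_eq_half (μ : Measure ℝ) {ξ t : ℝ} (ht : ξ * t = 1 / 2) :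
    ∫ x, exp (2 * π * I * ξ * x) ∂(μ.map (· + t)) = -∫ x, exp (2 * π * I * ξ * x) ∂μ := by
  have hshift : ∀ x : ℝ, exp (2 * π * I * ξ * ↑(x + t)) = -exp (2 * π * I * ξ * x) := by
    intro x
    have ht' : (ξ : ℂ) * t = 1 / 2 := by simpa using congrArg ((↑) : ℝ → ℂ) ht
    rw [ofReal_add, show 2 * π * I * ξ * (x + t) = 2 * π * I * ξ * x + π * I by
      linear_combination 2 * π * I * ht', Complex.exp_add, exp_pi_mul_I, mul_neg_one]
  rw [integral_map (measurable_add_const t).aemeasurable (by fun_prop)]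
  simp only [hshift, integral_neg]

theorem two_mul_norm_integral_exp_le_totalVariation (μ : Measure ℝ) [IsFiniteMeasure μ]
    {ξ t : ℝ} (ht : ξ * t = 1 / 2) :
    2 * ‖∫ x, exp (2 * π * I * ξ * x) ∂μ‖ ≤
      (μ.toSignedMeasure - (μ.map (· + t)).toSignedMeasure).totalVariation.real Set.univ := by
  have hnorm : ∀ x : ℝ, ‖exp (2 * π * I * ξ * x)‖ ≤ 1 := fun x => by
    rw [show 2 * π * I * ξ * x = ↑(2 * π * ξ * x) * I by push_cast; ring, norm_exp_ofReal_mul_I]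
  have := norm_integral_sub_integral_le_totalVariation μ (μ.map (· + t))
    (by fun_prop : Continuous _).stronglyMeasurable hnorm
  rwa [integral_exp_map_add_of_mul_eq_half μ ht, sub_neg_eq_add, ← two_mul, norm_mul,
    Complex.norm_two, one_mul] at this

open Real MeasureTheory Filter Finset in
theorem translates_stay_apart_general (α lam : ℝ) (hα : IsPisot α)
    (hlam : lam = 1 / α) (μ : Measure ℝ) [IsProbabilityMeasure μ]
    (C : ℝ)
    (hCk : ∀ k : ℕ,
        C < ‖∫ x, Complex.exp (2 * π * Complex.I * (α ^ k) * x) ∂μ‖) :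
    ∀ n : ℕ, 2 * C ≤ ((μ.toSignedMeasure -
        (μ.map (fun x => x + lam ^ n / 2)).toSignedMeasure).totalVariation
      Set.univ).toReal := by
  intro n
  have hα₀ : α ≠ 0 := (zero_lt_one.trans hα.1).ne'
  have hhalf : α ^ n * (lam ^ n / 2) = 1 / 2 := by
    rw [hlam, div_pow, one_pow]
    field_simp
  have hbound := two_mul_norm_integral_exp_le_totalVariation μ hhalf
  push_cast [measureReal_def] at hbound
  linarith [hCk n]

open Real MeasureTheory Filter Finset in
/-- Let α be a Pisot number, λ = 1/α, μ the infinite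
Bernoulli convolution with μ̂(ξ) = ∏_{n≥1} cos(2πλⁿξ), and C > 0 with
|μ̂(α^k)| > C for all k ≥ 0. Then ‖μ − T_{λⁿ/2}μ‖ ≥ 2C for all n ∈ ℕ,
where T_t is translation by t and ‖·‖ is the total variation norm. -/
theorem translates_stay_apart (α lam : ℝ) (hα : IsPisot α)
    (hlam : lam = 1 / α) (μ : Measure ℝ) [IsProbabilityMeasure μ]
    (hF : ∀ ξ : ℝ, Tendsto
        (fun M : ℕ => ((∏ n ∈ Finset.Icc 1 M, Real.cos (2 * π * lam ^ n * ξ) : ℝ) : ℂ))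
        atTop (nhds (∫ x, Complex.exp (2 * π * Complex.I * ξ * x) ∂μ)))
    (C : ℝ) (hC : 0 < C)
    (hCk : ∀ k : ℕ,
        C < ‖∫ x, Complex.exp (2 * π * Complex.I * (α ^ k) * x) ∂μ‖) :
    ∀ n : ℕ, 2 * C ≤ ((μ.toSignedMeasure -
        (μ.map (fun x => x + lam ^ n / 2)).toSignedMeasure).totalVariation
      Set.univ).toReal :=
  translates_stay_apart_general α lam hα hlam μ C hCk
end
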